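/- arXiv:1002.0918 — 2 statements merged into one kernel-verified Lean document; each statement's English description precedes it below -/
import Mathlib

section
/- Let s be a sign assignment on a toroidal grid diagram. For any generator x, any domain D in D(x,x) of Maslov index two that is a vertical annulus V_i decomposes uniquely as a sum of two rectangles R_x ∈ R(x,x') and R'_x ∈ R(x',x). Define v_{s,x}(i) = s(R_x)·s(R'_x). Then v_{s,x}(i) = v_{s,y}(i) for all generators x,y and all i; that is, the vertical function of a sign assignment is independent of the generator. The analogous statement holds for horizontal annuli and the horizontal function h_{s,x}. -/
open Equiv

/-- Membership in the half-open cyclic interval `[a, b)` in `ZMod N`. -/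
def InIco {N : ℕ} (a b t : ZMod N) : Prop := (t - a).val < (b - a).val

instance {N : ℕ} (a b t : ZMod N) : Decidable (InIco a b t) := by
  unfold InIco; infer_instance

/-- A (geometric) rectangle in the toroidal grid diagram of index `N`:
it spans the cyclic row interval `[r1, r2)` and the cyclic column interval
`[c1, c2)`, with bottom-left corner `(r1, c1)` and top-right corner `(r2, c2)`. -/
structure GridRect (N : ℕ) where
  r1 : ZMod N
  r2 : ZMod N
  c1 : ZMod N
  c2 : ZMod N
  hr : r1 ≠ r2
  hc : c1 ≠ c2

/-- The coefficient of the rectangle, viewed as a 2-chain, at the elementary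
domain whose bottom-left corner is `p = (row, column)`. -/
def GridRect.coeff {N : ℕ} (R : GridRect N) (p : ZMod N × ZMod N) : ℕ :=
  if InIco R.r1 R.r2 p.1 ∧ InIco R.c1 R.c2 p.2 then 1 else 0

/-- `R` is a rectangle joining the generator `x` to the generator `y`;
generators are recorded as permutations, the generator `x` having coordinates
`(r, x r)` for `r : ZMod N`.  The bottom-left and top-right corners of `R` are
coordinates of `x`, the other two corners are coordinates of `y`, the
remaining `N - 2` coordinates are shared, and the interior of `R` contains no
coordinate of `x` (equivalently, of `y`). -/
def Connects {N : ℕ} (R : GridRect N) (x y : Equiv.Perm (ZMod N)) : Prop :=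
  x R.r1 = R.c1 ∧ x R.r2 = R.c2 ∧ y R.r1 = R.c2 ∧ y R.r2 = R.c1 ∧
  (∀ r, r ≠ R.r1 → r ≠ R.r2 → x r = y r) ∧
  (∀ r, InIco R.r1 R.r2 r → r ≠ R.r1 → ¬(InIco R.c1 R.c2 (x r) ∧ x r ≠ R.c1))

/-- A sign assignment: `s x R` is the sign (±1) of the rectangle `R` regarded
as a rectangle with initial generator `x`.  Whenever a Maslov index two domain
with four distinct generators involved admits two different decompositions as
sums of two rectangles, the two sign products are opposite. -/
def IsSignAssignment {N : ℕ} (s : Equiv.Perm (ZMod N) → GridRect N → ℤ) : Prop :=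
  (∀ x R, s x R = 1 ∨ s x R = -1) ∧
  ∀ (x y z z' : Equiv.Perm (ZMod N)) (R1 R2 R1' R2' : GridRect N),
    x ≠ y → x ≠ z → x ≠ z' → y ≠ z → y ≠ z' → z ≠ z' →
    Connects R1 x z → Connects R2 z y → Connects R1' x z' → Connects R2' z' y →
    (∀ p, R1.coeff p + R2.coeff p = R1'.coeff p + R2'.coeff p) →
    s x R1 * s z R2 = -(s x R1' * s z' R2')

/-- `(x', R, R')` is a decomposition of the vertical annulus `V c` (the column
of elementary domains `(·, c)`) as a sum of two rectangles based at the
generator `x`. -/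
def IsVertDecomp {N : ℕ} (c : ZMod N) (x x' : Equiv.Perm (ZMod N))
    (R R' : GridRect N) : Prop :=
  Connects R x x' ∧ Connects R' x' x ∧
  ∀ p : ZMod N × ZMod N, R.coeff p + R'.coeff p = if p.2 = c then 1 else 0

/-- `(x', R, R')` is a decomposition of the horizontal annulus `H r` as a sum
of two rectangles based at the generator `x`. -/
def IsHorizDecomp {N : ℕ} (r : ZMod N) (x x' : Equiv.Perm (ZMod N))
    (R R' : GridRect N) : Prop :=
  Connects R x x' ∧ Connects R' x' x ∧
  ∀ p : ZMod N × ZMod N, R.coeff p + R'.coeff p = if p.1 = r then 1 else 0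

/-- Gauge equivalence of sign assignments. -/
def GaugeEquiv {N : ℕ} (s1 s2 : Equiv.Perm (ZMod N) → GridRect N → ℤ) : Prop :=
  ∃ t : Equiv.Perm (ZMod N) → ℤ, (∀ x, t x = 1 ∨ t x = -1) ∧
    ∀ x y R, Connects R x y → s1 x R = t x * t y * s2 x R

/-!
The decomposition of `V_c` based at `x` is forced: both rectangles lie in column `c` and have
width one, so they are the two thin rectangles between the points of `x` in columns `c` and
`c + 1`, and `x'` is `x` with these two columns exchanged.

Exchanging two adjacent columns `a, a + 1` with `a ≠ c - 1` does not change `v_{s,x}(c)`: the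
rectangles of `V_c` together with the width-one rectangles in column `a` form two Maslov index two
domains with two decompositions each, and the two resulting sign relations multiply to the
claim. When `a = c + 1` the rectangles overlap and a rectangle of width two completes both
domains. These exchanges are transpositions acting transitively on the columns, so they
generate all permutations. The horizontal statement is the vertical one for the transposed
diagram, whose generators are the inverse permutations.
-/
section CyclicInterval

variable {N : ℕ} [NeZero N]

lemma ZMod.val_sub_eq_ite (a b : ZMod N) :
    (a - b).val = if b.val ≤ a.val then a.val - b.val else a.val + N - b.val := by
  split_ifs with h
  · exact ZMod.val_sub h
  · have hab : ((a - b).val + b.val) % N = a.val := by rw [← ZMod.val_add, sub_add_cancel]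
    have := ZMod.val_lt (a - b)
    have := ZMod.val_lt b
    rcases Nat.lt_or_ge ((a - b).val + b.val) N with h' | h'
    · rw [Nat.mod_eq_of_lt h'] at hab; omega
    · rw [Nat.mod_eq_sub_mod h', Nat.mod_eq_of_lt (by omega)] at hab; omega

lemma inIco_iff_val {a b t : ZMod N} :
    InIco a b t ↔ (a.val ≤ t.val ∧ t.val < b.val) ∨
      (b.val < a.val ∧ (a.val ≤ t.val ∨ t.val < b.val)) := by
  have := ZMod.val_lt a; have := ZMod.val_lt b; have := ZMod.val_lt t
  rw [InIco, ZMod.val_sub_eq_ite, ZMod.val_sub_eq_ite]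
  split_ifs <;> omega

lemma inIco_self {a b : ZMod N} (h : a ≠ b) : InIco a b a := by
  have := (ZMod.val_injective N).ne h
  rw [inIco_iff_val]; omega

lemma ite_inIco_eq_add {a b d : ZMod N} (h : InIco a d b) (t : ZMod N) :
    (if InIco a d t then 1 else 0 : ℕ) =
      (if InIco a b t then 1 else 0) + (if InIco b d t then 1 else 0) := by
  rw [inIco_iff_val] at h
  simp only [inIco_iff_val]
  split_ifs <;> omega

lemma ite_inIco_add_ite_inIco_swap {a b : ZMod N} (h : a ≠ b) (t : ZMod N) :
    (if InIco a b t then 1 else 0 : ℕ) + (if InIco b a t then 1 else 0) = 1 := by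
  have := (ZMod.val_injective N).ne h
  simp only [inIco_iff_val]
  split_ifs <;> omega

lemma InIco.rotate {a b c : ZMod N} (h : InIco a c b) (hab : a ≠ b) : InIco b a c := by
  have := (ZMod.val_injective N).ne hab
  rw [inIco_iff_val] at h ⊢; omega

lemma InIco.not_inIco_rotate {a b c : ZMod N} (h : InIco a c b) (hab : a ≠ b) :
    ¬InIco b c a := by
  have := (ZMod.val_injective N).ne hab
  rw [inIco_iff_val] at h ⊢; omega

lemma inIco_of_not_inIco {a b c : ZMod N} (h : ¬InIco a c b) (hab : a ≠ b) (hbc : b ≠ c)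
    (hac : a ≠ c) : InIco a b c := by
  have := (ZMod.val_injective N).ne hab
  have := (ZMod.val_injective N).ne hbc
  have := (ZMod.val_injective N).ne hac
  rw [inIco_iff_val] at h ⊢; omega

end CyclicInterval

section CyclicIntervalOfLength

variable {N : ℕ} [Fact (1 < N)]

lemma inIco_add_one_iff {c t : ZMod N} : InIco c (c + 1) t ↔ t = c := by
  rw [InIco, add_sub_cancel_left, ZMod.val_one, Nat.lt_one_iff, ZMod.val_eq_zero, sub_eq_zero]

lemma inIco_add_one_of_ne {c d : ZMod N} (h : d ≠ c) (h' : d ≠ c + 1) : InIco c d (c + 1) := by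
  have h0 : (d - c).val ≠ 0 := by rwa [Ne, ZMod.val_eq_zero, sub_eq_zero]
  have h1 : (d - c).val ≠ 1 := by
    rwa [Ne, ← ZMod.val_one N, (ZMod.val_injective N).eq_iff, sub_eq_iff_eq_add']
  rw [InIco, add_sub_cancel_left, ZMod.val_one]
  omega

lemma eq_and_eq_add_one_of_forall_inIco {a b c : ZMod N} (hab : a ≠ b)
    (h : ∀ t, InIco a b t → t = c) : a = c ∧ b = c + 1 := by
  obtain rfl := h a (inIco_self hab)
  refine ⟨rfl, by_contra fun hb => ?_⟩
  exact (succ_ne_self a) (h _ (inIco_add_one_of_ne hab.symm hb))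

lemma InIco.eq_or_eq_add_one {c t : ZMod N} (h : InIco c (c + 1 + 1) t) : t = c ∨ t = c + 1 := by
  have h2 : (1 + 1 : ZMod N).val ≤ 2 := by rw [ZMod.val_add, ZMod.val_one]; exact Nat.mod_le _ _
  rw [InIco, add_assoc, add_sub_cancel_left] at h
  rcases (by omega : (t - c).val = 0 ∨ (t - c).val = 1) with h | h
  · rw [ZMod.val_eq_zero, sub_eq_zero] at h
    exact Or.inl h
  · rw [← ZMod.val_one N, (ZMod.val_injective N).eq_iff, sub_eq_iff_eq_add'] at h
    exact Or.inr h

end CyclicIntervalOfLength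

attribute [ext] GridRect

section Generators

variable {N : ℕ} {R : GridRect N} {x y : Perm (ZMod N)}

lemma GridRect.coeff_eq_mul (R : GridRect N) (p : ZMod N × ZMod N) :
    R.coeff p =
      (if InIco R.r1 R.r2 p.1 then 1 else 0) * (if InIco R.c1 R.c2 p.2 then 1 else 0) := by
  rw [ite_zero_mul_ite_zero, one_mul, GridRect.coeff]

lemma Connects.ne (h : Connects R x y) : x ≠ y :=
  fun e => R.hc (by rw [← h.1, e, h.2.2.1])

lemma Connects.r1_eq (h : Connects R x y) : R.r1 = x⁻¹ R.c1 :=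
  Perm.eq_inv_iff_eq.2 h.1

lemma Connects.r2_eq (h : Connects R x y) : R.r2 = x⁻¹ R.c2 :=
  Perm.eq_inv_iff_eq.2 h.2.1

lemma Connects.eq_swap_mul (h : Connects R x y) : y = swap R.c1 R.c2 * x := by
  obtain ⟨h1, h2, h3, h4, h5, -⟩ := h
  ext r
  rw [Perm.mul_apply]
  by_cases hr1 : r = R.r1
  · rw [hr1, h1, h3, swap_apply_left]
  by_cases hr2 : r = R.r2
  · rw [hr2, h2, h4, swap_apply_right]
  rw [← h5 r hr1 hr2, swap_apply_of_ne_of_ne (h1 ▸ x.injective.ne hr1)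
    (h2 ▸ x.injective.ne hr2)]

variable [Fact (1 < N)]

@[simps]
def colRect (c : ZMod N) (x : Perm (ZMod N)) : GridRect N where
  r1 := x⁻¹ c
  r2 := x⁻¹ (c + 1)
  c1 := c
  c2 := c + 1
  hr := x⁻¹.injective.ne (succ_ne_self c).symm
  hc := (succ_ne_self c).symm

lemma connects_colRect (c : ZMod N) (x : Perm (ZMod N)) :
    Connects (colRect c x) x (swap c (c + 1) * x) := by
  refine ⟨by simp, by simp, by simp, by simp, fun r h1 h2 => ?_, fun r _ _ h => ?_⟩
  · rw [Perm.mul_apply, swap_apply_of_ne_of_ne (Perm.eq_inv_iff_eq.not.1 h1)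
      (Perm.eq_inv_iff_eq.not.1 h2)]
  · exact h.2 (inIco_add_one_iff.1 h.1)

lemma Connects.eq_colRect {c : ZMod N} (h : Connects R x y) (h1 : R.c1 = c) (h2 : R.c2 = c + 1) :
    R = colRect c x ∧ y = swap c (c + 1) * x := by
  refine ⟨GridRect.ext ?_ ?_ h1 h2, by rw [h.eq_swap_mul, h1, h2]⟩
  · rw [h.r1_eq, h1, colRect_r1]
  · rw [h.r2_eq, h2, colRect_r2]

lemma GridRect.cols_eq_of_coeff_le {c : ZMod N}
    (h : ∀ p, R.coeff p ≤ if p.2 = c then 1 else 0) :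
    R.c1 = c ∧ R.c2 = c + 1 := by
  refine eq_and_eq_add_one_of_forall_inIco R.hc fun t ht => by_contra fun hne => ?_
  simpa [GridRect.coeff, inIco_self R.hr, ht, hne] using h (R.r1, t)

lemma isVertDecomp_colRect (c : ZMod N) (x : Perm (ZMod N)) :
    IsVertDecomp c x (swap c (c + 1) * x) (colRect c x) (colRect c (swap c (c + 1) * x)) := by
  refine ⟨connects_colRect c x, by simpa using connects_colRect c (swap c (c + 1) * x),
    fun p => ?_⟩
  simp only [GridRect.coeff_eq_mul, colRect_r1, colRect_r2, colRect_c1, colRect_c2,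
    inIco_add_one_iff, mul_inv_rev, swap_inv, Perm.mul_apply, swap_apply_left, swap_apply_right]
  by_cases hp : p.2 = c
  · simp only [hp, if_true, mul_one]
    exact ite_inIco_add_ite_inIco_swap (x⁻¹.injective.ne (succ_ne_self c).symm) p.1
  · simp [hp]

lemma IsVertDecomp.eq {c : ZMod N} {x' : Perm (ZMod N)} {R' : GridRect N}
    (h : IsVertDecomp c x x' R R') :
    x' = swap c (c + 1) * x ∧ R = colRect c x ∧ R' = colRect c x' := by
  obtain ⟨hR, hR', hsum⟩ := h
  obtain ⟨h1, h2⟩ := R.cols_eq_of_coeff_le fun p => hsum p ▸ Nat.le_add_right _ _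
  obtain ⟨h1', h2'⟩ := R'.cols_eq_of_coeff_le fun p => hsum p ▸ Nat.le_add_left _ _
  obtain ⟨rfl, rfl⟩ := hR.eq_colRect h1 h2
  exact ⟨rfl, rfl, (hR'.eq_colRect h1' h2').1⟩

lemma existsUnique_isVertDecomp (c : ZMod N) (x : Perm (ZMod N)) :
    ∃! d : Perm (ZMod N) × GridRect N × GridRect N, IsVertDecomp c x d.1 d.2.1 d.2.2 := by
  refine ⟨(swap c (c + 1) * x, colRect c x, colRect c (swap c (c + 1) * x)),
    isVertDecomp_colRect c x, fun d hd => ?_⟩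
  obtain ⟨x', R, R'⟩ := d
  obtain ⟨rfl, rfl, rfl⟩ := (show IsVertDecomp c x x' R R' from hd).eq
  rfl

lemma colRect_swap_mul_of_ne {a c : ZMod N} (h1 : a ≠ c) (h2 : a ≠ c + 1) (h3 : a + 1 ≠ c)
    (x : Perm (ZMod N)) : colRect a (swap c (c + 1) * x) = colRect a x := by
  have h4 : a + 1 ≠ c + 1 := (add_left_injective 1).ne h1
  ext <;> simp [swap_apply_of_ne_of_ne, *]

end Generators

lemma mul_eq_mul_of_mul_eq_neg_mul {α : Type*} [CommRing α] [NoZeroDivisors α]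
    {a b a' b' t u : α} (ht : t ≠ 0) (hu : u ≠ 0)
    (h1 : a * u = -(t * a')) (h2 : b * t = -(u * b')) : a' * b' = a * b :=
  mul_right_cancel₀ (mul_ne_zero ht hu) (by linear_combination (-(b * t)) * h1 + (t * a') * h2)

section SignAssignment

variable {N : ℕ} {s : Perm (ZMod N) → GridRect N → ℤ}

lemma IsSignAssignment.ne_zero (hs : IsSignAssignment s) (x : Perm (ZMod N)) (R : GridRect N) :
    s x R ≠ 0 := by
  rcases hs.1 x R with h | h <;> simp [h]

lemma IsSignAssignment.mul_eq_neg_mul (hs : IsSignAssignment s) {x y z z' : Perm (ZMod N)}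
    {R1 R2 R1' R2' : GridRect N} (hxy : x ≠ y) (hzz' : z ≠ z')
    (h1 : Connects R1 x z) (h2 : Connects R2 z y) (h1' : Connects R1' x z')
    (h2' : Connects R2' z' y) (hD : ∀ p, R1.coeff p + R2.coeff p = R1'.coeff p + R2'.coeff p) :
    s x R1 * s z R2 = -(s x R1' * s z' R2') :=
  hs.2 x y z z' R1 R2 R1' R2' hxy h1.ne h1'.ne h2.ne.symm h2'.ne.symm hzz' h1 h2 h1' h2' hD

variable [Fact (1 < N)]

-- the paper's `v_{s,x}(c)`
def vertSign (s : Perm (ZMod N) → GridRect N → ℤ) (c : ZMod N) (x : Perm (ZMod N)) : ℤ :=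
  s x (colRect c x) * s (swap c (c + 1) * x) (colRect c (swap c (c + 1) * x))

lemma vertSign_swap_mul_self (c : ZMod N) (x : Perm (ZMod N)) :
    vertSign s c (swap c (c + 1) * x) = vertSign s c x := by
  rw [vertSign, vertSign, swap_mul_self_mul, mul_comm]

lemma vertSign_swap_mul_of_ne (hs : IsSignAssignment s) {a c : ZMod N} (h1 : a ≠ c)
    (h2 : a ≠ c + 1) (h3 : a + 1 ≠ c) (x : Perm (ZMod N)) :
    vertSign s c (swap a (a + 1) * x) = vertSign s c x := by
  have h4 : a + 1 ≠ c + 1 := (add_left_injective 1).ne h1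
  have hcomm : swap c (c + 1) * swap a (a + 1) = swap a (a + 1) * swap c (c + 1) :=
    (Perm.Disjoint.commute
      (Perm.disjoint_swap_swap (by simp [h1.symm, h2.symm, h3.symm, h4.symm]))).eq
  have hRc : ∀ y, colRect c (swap a (a + 1) * y) = colRect c y :=
    colRect_swap_mul_of_ne h1.symm h3.symm h2.symm
  have hRa : ∀ y, colRect a (swap c (c + 1) * y) = colRect a y :=
    colRect_swap_mul_of_ne h1 h2 h3
  set x' := swap c (c + 1) * x
  set y := swap a (a + 1) * x
  set w := swap a (a + 1) * x'
  have hy' : swap c (c + 1) * y = w := by simp only [y, w, x', ← mul_assoc, hcomm]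
  have hxw : x ≠ w := fun h => by
    simpa [w, x', swap_apply_of_ne_of_ne, h4.symm, h2.symm] using congr($h (x⁻¹ c))
  have hx'y : x' ≠ y := fun h => by
    simpa [y, x', swap_apply_of_ne_of_ne, h1.symm, h3.symm] using congr($h (x⁻¹ c))
  have C1 : Connects (colRect c x) x x' := connects_colRect c x
  have C2 : Connects (colRect a x) x' w := hRa x ▸ connects_colRect a x'
  have C3 : Connects (colRect a x) x y := connects_colRect a x
  have C4 : Connects (colRect c x) y w := hRc x ▸ hy' ▸ connects_colRect c y
  have C5 : Connects (colRect c x') x' x := (isVertDecomp_colRect c x).2.1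
  have C6 : Connects (colRect c x') w y := by
    have := (isVertDecomp_colRect c y).2.1
    rwa [hy', show colRect c w = colRect c x' from hRc x'] at this
  have E1 := hs.mul_eq_neg_mul hxw hx'y C1 C2 C3 C4 fun _ => add_comm _ _
  have E2 := hs.mul_eq_neg_mul hx'y hxw C5 C3 C2 C6 fun _ => add_comm _ _
  rw [vertSign, vertSign, hRc, hy', hRc]
  exact mul_eq_mul_of_mul_eq_neg_mul (hs.ne_zero _ _) (hs.ne_zero _ _) E1 E2

@[simps]
def wideRect (c : ZMod N) (x : Perm (ZMod N)) (hc : c + 1 + 1 ≠ c) : GridRect N where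
  r1 := x⁻¹ (c + 1)
  r2 := x⁻¹ (c + 1 + 1)
  c1 := c
  c2 := c + 1 + 1
  hr := x⁻¹.injective.ne (succ_ne_self (c + 1)).symm
  hc := hc.symm

lemma connects_wideRect {c : ZMod N} (hc : c + 1 + 1 ≠ c) {x : Perm (ZMod N)}
    (hI : InIco (x⁻¹ c) (x⁻¹ (c + 1 + 1)) (x⁻¹ (c + 1))) :
    Connects (wideRect c x hc) (swap c (c + 1) * x)
      (swap c (c + 1) * (swap (c + 1) (c + 1 + 1) * x)) := by
  have d01 := (succ_ne_self c).symm
  have d12 := (succ_ne_self (c + 1)).symm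
  refine ⟨by simp, by simp [swap_apply_of_ne_of_ne, hc, d12.symm],
    by simp [swap_apply_of_ne_of_ne, hc, d12.symm], by simp, fun r h1 h2 => ?_,
    fun r hr hr1 h => ?_⟩
  · simp only [Perm.mul_apply]
    rw [swap_apply_of_ne_of_ne (Perm.eq_inv_iff_eq.not.1 h1) (Perm.eq_inv_iff_eq.not.1 h2)]
  · obtain hr0 | hr0 := h.1.eq_or_eq_add_one
    · exact h.2 hr0
    · have : r = x⁻¹ c := Perm.eq_inv_iff_eq.2 (by simpa [swap_apply_eq_iff] using hr0)
      exact hI.not_inIco_rotate (x⁻¹.injective.ne d01) (this ▸ hr)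

lemma vertSign_swap_add_one_mul_of_inIco (hs : IsSignAssignment s) {c : ZMod N}
    (hc : c + 1 + 1 ≠ c) {x : Perm (ZMod N)}
    (hI : InIco (x⁻¹ c) (x⁻¹ (c + 1 + 1)) (x⁻¹ (c + 1))) :
    vertSign s c (swap (c + 1) (c + 1 + 1) * x) = vertSign s c x := by
  have d01 := (succ_ne_self c).symm
  have d12 := (succ_ne_self (c + 1)).symm
  set x' := swap c (c + 1) * x
  set y := swap (c + 1) (c + 1 + 1) * x
  set y' := swap c (c + 1) * y
  have hxy' : x ≠ y' := fun h => by
    simpa [y', y, swap_apply_of_ne_of_ne, d01, hc.symm] using congr($h (x⁻¹ c))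
  have hx'y : x' ≠ y := fun h => by
    simpa [x', y, swap_apply_of_ne_of_ne, d01, hc.symm] using congr($h (x⁻¹ c))
  have hIc : InIco c (c + 1 + 1) (c + 1) := inIco_add_one_of_ne hc (succ_ne_self (c + 1))
  have hD1 : ∀ p, (colRect c x).coeff p + (wideRect c x hc).coeff p =
      (colRect (c + 1) x).coeff p + (colRect c y).coeff p := fun p => by
    simp only [GridRect.coeff_eq_mul, colRect_r1, colRect_r2, colRect_c1, colRect_c2,
      wideRect_r1, wideRect_r2, wideRect_c1, wideRect_c2, y, mul_inv_rev, swap_inv,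
      Perm.mul_apply, swap_apply_left, swap_apply_of_ne_of_ne d01 hc.symm]
    rw [ite_inIco_eq_add hIc p.2, ite_inIco_eq_add hI p.1]
    ring
  have hD2 : ∀ p, (colRect c x').coeff p + (colRect (c + 1) x).coeff p =
      (wideRect c x hc).coeff p + (colRect c y').coeff p := fun p => by
    simp only [GridRect.coeff_eq_mul, colRect_r1, colRect_r2, colRect_c1, colRect_c2,
      wideRect_r1, wideRect_r2, wideRect_c1, wideRect_c2, x', y', y, mul_inv_rev, swap_inv,
      Perm.mul_apply, swap_apply_left, swap_apply_right, swap_apply_of_ne_of_ne d01 hc.symm]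
    rw [ite_inIco_eq_add hIc p.2, ite_inIco_eq_add (hI.rotate (x⁻¹.injective.ne d01)) p.1]
    ring
  have E1 := hs.mul_eq_neg_mul hxy' hx'y (connects_colRect c x) (connects_wideRect hc hI)
    (connects_colRect (c + 1) x) (connects_colRect c y) hD1
  have E2 := hs.mul_eq_neg_mul hx'y hxy' (isVertDecomp_colRect c x).2.1
    (connects_colRect (c + 1) x) (connects_wideRect hc hI) (isVertDecomp_colRect c y).2.1 hD2
  exact mul_eq_mul_of_mul_eq_neg_mul (hs.ne_zero _ _) (hs.ne_zero _ _) E1 E2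

lemma vertSign_swap_mul (hs : IsSignAssignment s) {a c : ZMod N} (ha : a ≠ c - 1)
    (x : Perm (ZMod N)) : vertSign s c (swap a (a + 1) * x) = vertSign s c x := by
  have ha' : a + 1 ≠ c := fun h => ha (eq_sub_of_add_eq h)
  obtain rfl | h1 := eq_or_ne a c
  · exact vertSign_swap_mul_self a x
  obtain rfl | h2 := eq_or_ne a (c + 1)
  · by_cases hI : InIco (x⁻¹ c) (x⁻¹ (c + 1 + 1)) (x⁻¹ (c + 1))
    · exact vertSign_swap_add_one_mul_of_inIco hs ha' hI
    · -- the first case applies to `swap (c + 1) (c + 1 + 1) * x`, which reverses the cyclic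
      -- order of the rows in columns `c, c + 1, c + 2`
      have hIy : InIco ((swap (c + 1) (c + 1 + 1) * x)⁻¹ c)
          ((swap (c + 1) (c + 1 + 1) * x)⁻¹ (c + 1 + 1))
          ((swap (c + 1) (c + 1 + 1) * x)⁻¹ (c + 1)) := by
        simp only [mul_inv_rev, swap_inv, Perm.mul_apply, swap_apply_left, swap_apply_right,
          swap_apply_of_ne_of_ne (succ_ne_self c).symm ha'.symm]
        exact inIco_of_not_inIco hI (x⁻¹.injective.ne (succ_ne_self c).symm)
          (x⁻¹.injective.ne (succ_ne_self (c + 1)).symm) (x⁻¹.injective.ne ha'.symm)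
      have := vertSign_swap_add_one_mul_of_inIco hs ha' hIy
      rwa [swap_mul_self_mul, eq_comm] at this
  · exact vertSign_swap_mul_of_ne hs h1 h2 ha' x

end SignAssignment

section Generation

variable {N : ℕ} [Fact (1 < N)]

-- the transpositions of consecutive columns along the path `c, c + 1, …, c - 1`
def pathSwaps (c : ZMod N) : Set (Perm (ZMod N)) :=
  {σ | ∃ a, a ≠ c - 1 ∧ swap a (a + 1) = σ}

lemma closure_pathSwaps (c : ZMod N) : Subgroup.closure (pathSwaps c) = ⊤ := by
  set H := Subgroup.closure (pathSwaps c)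
  have reach : ∀ k < N, ∃ g ∈ H, g c = c + k := by
    intro k
    induction k with
    | zero => exact fun _ => ⟨1, H.one_mem, by simp⟩
    | succ k ih =>
      intro hk
      obtain ⟨g, hg, hgc⟩ := ih (by omega)
      have hk' : c + k ≠ c - 1 := fun h => by
        have : ((k + 1 : ℕ) : ZMod N) = 0 := by push_cast; linear_combination h
        exact Nat.not_dvd_of_pos_of_lt k.succ_pos hk ((ZMod.natCast_eq_zero_iff _ _).1 this)
      refine ⟨swap (c + k) (c + k + 1) * g,
        H.mul_mem (Subgroup.subset_closure ⟨_, hk', rfl⟩) hg, ?_⟩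
      rw [Perm.mul_apply, hgc, swap_apply_left]
      push_cast
      ring
  have hreach : ∀ v, ∃ g ∈ H, g c = v := fun v => by
    simpa using reach (v - c).val (ZMod.val_lt _)
  have : MulAction.IsPretransitive H (ZMod N) := ⟨fun u v => by
    obtain ⟨g, hg, rfl⟩ := hreach u
    obtain ⟨h, hh, rfl⟩ := hreach v
    exact ⟨⟨h * g⁻¹, H.mul_mem hh (H.inv_mem hg)⟩, by simp [Subgroup.smul_def]⟩⟩
  refine closure_of_isSwap_of_isPretransitive ?_
  rintro _ ⟨a, -, rfl⟩
  exact ⟨a, a + 1, (succ_ne_self a).symm, rfl⟩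

end Generation

section Vertical

variable {N : ℕ} [Fact (1 < N)] {s : Perm (ZMod N) → GridRect N → ℤ}

lemma vertSign_eq (hs : IsSignAssignment s) (c : ZMod N) (x y : Perm (ZMod N)) :
    vertSign s c x = vertSign s c y := by
  have key : ∀ σ ∈ Subgroup.closure (pathSwaps c), ∀ x,
      vertSign s c (σ * x) = vertSign s c x := by
    intro σ hσ
    induction hσ using Subgroup.closure_induction with
    | mem σ hσ => obtain ⟨a, ha, rfl⟩ := hσ; exact vertSign_swap_mul hs ha
    | one => simp
    | mul σ ρ _ _ hσ hρ => intro x; rw [mul_assoc, hσ, hρ]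
    | inv σ _ hσ => intro x; rw [← hσ, mul_inv_cancel_left]
  have := key (y * x⁻¹) (by rw [closure_pathSwaps]; trivial) x
  rwa [inv_mul_cancel_right, eq_comm] at this

theorem IsSignAssignment.mul_eq_of_isVertDecomp (hs : IsSignAssignment s) {c : ZMod N}
    {x x' y y' : Perm (ZMod N)} {Rx Rx' Ry Ry' : GridRect N}
    (hx : IsVertDecomp c x x' Rx Rx') (hy : IsVertDecomp c y y' Ry Ry') :
    s x Rx * s x' Rx' = s y Ry * s y' Ry' := by
  obtain ⟨rfl, rfl, rfl⟩ := hx.eq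
  obtain ⟨rfl, rfl, rfl⟩ := hy.eq
  exact vertSign_eq hs c x y

end Vertical

section Transpose

variable {N : ℕ}

@[simps]
def GridRect.transpose (R : GridRect N) : GridRect N := ⟨R.c1, R.c2, R.r1, R.r2, R.hc, R.hr⟩

@[simp]
lemma GridRect.transpose_transpose (R : GridRect N) : R.transpose.transpose = R := rfl

lemma GridRect.coeff_transpose (R : GridRect N) (p : ZMod N × ZMod N) :
    R.transpose.coeff p = R.coeff p.swap := by
  simp only [GridRect.coeff, GridRect.transpose, Prod.fst_swap, Prod.snd_swap, and_comm]

lemma Connects.transpose {R : GridRect N} {x y : Perm (ZMod N)} (h : Connects R x y) :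
    Connects R.transpose x⁻¹ y⁻¹ := by
  obtain ⟨h1, h2, h3, h4, h5, h6⟩ := h
  refine ⟨Perm.inv_eq_iff_eq.2 h1.symm, Perm.inv_eq_iff_eq.2 h2.symm,
    Perm.inv_eq_iff_eq.2 h4.symm, Perm.inv_eq_iff_eq.2 h3.symm, fun g hg1 hg2 => ?_,
    fun g hg hg1 hgc => ?_⟩
  · have hr1 : x⁻¹ g ≠ R.r1 := fun h => hg1 (by simp [← h1, ← h])
    have hr2 : x⁻¹ g ≠ R.r2 := fun h => hg2 (by simp [← h2, ← h])
    exact Perm.eq_inv_iff_eq.2 (by rw [← h5 _ hr1 hr2]; simp)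
  · exact h6 (x⁻¹ g) hgc.1 hgc.2 (by simpa using And.intro hg hg1)

lemma isHorizDecomp_iff_isVertDecomp_transpose {r : ZMod N} {x x' : Perm (ZMod N)}
    {R R' : GridRect N} :
    IsHorizDecomp r x x' R R' ↔ IsVertDecomp r x⁻¹ x'⁻¹ R.transpose R'.transpose := by
  refine ⟨fun ⟨h1, h2, h3⟩ => ⟨h1.transpose, h2.transpose, fun p => ?_⟩,
    fun ⟨h1, h2, h3⟩ =>
      ⟨by simpa using h1.transpose, by simpa using h2.transpose, fun p => ?_⟩⟩
  · simpa [GridRect.coeff_transpose] using h3 p.swap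
  · simpa [GridRect.coeff_transpose] using h3 p.swap

lemma IsSignAssignment.transpose {s : Perm (ZMod N) → GridRect N → ℤ}
    (hs : IsSignAssignment s) :
    IsSignAssignment fun x R => s x⁻¹ R.transpose := by
  refine ⟨fun x R => hs.1 x⁻¹ R.transpose, fun x y z z' R1 R2 R1' R2' d1 d2 d3 d4 d5 d6
    c1 c2 c3 c4 hD => hs.2 _ _ _ _ _ _ _ _ (inv_injective.ne d1) (inv_injective.ne d2)
    (inv_injective.ne d3) (inv_injective.ne d4) (inv_injective.ne d5) (inv_injective.ne d6)
    c1.transpose c2.transpose c3.transpose c4.transpose fun p => ?_⟩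
  simpa [GridRect.coeff_transpose] using hD p.swap

lemma existsUnique_isHorizDecomp [Fact (1 < N)] (r : ZMod N) (x : Perm (ZMod N)) :
    ∃! d : Perm (ZMod N) × GridRect N × GridRect N, IsHorizDecomp r x d.1 d.2.1 d.2.2 := by
  let e := Function.Involutive.toPerm _ (GridRect.transpose_transpose (N := N))
  exact ((Equiv.inv _).prodCongr (e.prodCongr e)).existsUnique_congr
    (fun _ => isHorizDecomp_iff_isVertDecomp_transpose) |>.2 (existsUnique_isVertDecomp r x⁻¹)

theorem IsSignAssignment.mul_eq_of_isHorizDecomp [Fact (1 < N)]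
    {s : Perm (ZMod N) → GridRect N → ℤ} (hs : IsSignAssignment s) {r : ZMod N}
    {x x' y y' : Perm (ZMod N)} {Rx Rx' Ry Ry' : GridRect N}
    (hx : IsHorizDecomp r x x' Rx Rx') (hy : IsHorizDecomp r y y' Ry Ry') :
    s x Rx * s x' Rx' = s y Ry * s y' Ry' := by
  simpa using hs.transpose.mul_eq_of_isVertDecomp
    (isHorizDecomp_iff_isVertDecomp_transpose.1 hx) (isHorizDecomp_iff_isVertDecomp_transpose.1 hy)

end Transpose

theorem annulus_sign_independent_of_generator_general {N : ℕ} (hN : 2 ≤ N)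
    (s : Equiv.Perm (ZMod N) → GridRect N → ℤ) (hs : IsSignAssignment s) :
    (∀ (c : ZMod N) (x : Equiv.Perm (ZMod N)),
      ∃! d : Equiv.Perm (ZMod N) × GridRect N × GridRect N,
        IsVertDecomp c x d.1 d.2.1 d.2.2) ∧
    (∀ (r : ZMod N) (x : Equiv.Perm (ZMod N)),
      ∃! d : Equiv.Perm (ZMod N) × GridRect N × GridRect N,
        IsHorizDecomp r x d.1 d.2.1 d.2.2) ∧
    (∀ (c : ZMod N) (x x' y y' : Equiv.Perm (ZMod N)) (Rx Rx' Ry Ry' : GridRect N),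
      IsVertDecomp c x x' Rx Rx' → IsVertDecomp c y y' Ry Ry' →
      s x Rx * s x' Rx' = s y Ry * s y' Ry') ∧
    (∀ (r : ZMod N) (x x' y y' : Equiv.Perm (ZMod N)) (Rx Rx' Ry Ry' : GridRect N),
      IsHorizDecomp r x x' Rx Rx' → IsHorizDecomp r y y' Ry Ry' →
      s x Rx * s x' Rx' = s y Ry * s y' Ry') := by
  have : Fact (1 < N) := ⟨hN⟩
  exact ⟨existsUnique_isVertDecomp, existsUnique_isHorizDecomp,
    fun _ _ _ _ _ _ _ _ _ => hs.mul_eq_of_isVertDecomp,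
    fun _ _ _ _ _ _ _ _ _ => hs.mul_eq_of_isHorizDecomp⟩

/-- For `N ≥ 2`, every vertical annulus `V c` and every horizontal annulus
`H r` decomposes uniquely as a sum of two rectangles based at any generator
`x`, and for a sign assignment `s` the resulting products of signs — the
vertical function `v_{s,x}(c)` and the horizontal function `h_{s,x}(r)` — do
not depend on the generator at which the annulus is based. -/
theorem annulus_sign_independent_of_generator {N : ℕ} [NeZero N] (hN : 2 ≤ N)
    (s : Equiv.Perm (ZMod N) → GridRect N → ℤ) (hs : IsSignAssignment s) :
    (∀ (c : ZMod N) (x : Equiv.Perm (ZMod N)),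
      ∃! d : Equiv.Perm (ZMod N) × GridRect N × GridRect N,
        IsVertDecomp c x d.1 d.2.1 d.2.2) ∧
    (∀ (r : ZMod N) (x : Equiv.Perm (ZMod N)),
      ∃! d : Equiv.Perm (ZMod N) × GridRect N × GridRect N,
        IsHorizDecomp r x d.1 d.2.1 d.2.2) ∧
    (∀ (c : ZMod N) (x x' y y' : Equiv.Perm (ZMod N)) (Rx Rx' Ry Ry' : GridRect N),
      IsVertDecomp c x x' Rx Rx' → IsVertDecomp c y y' Ry Ry' →
      s x Rx * s x' Rx' = s y Ry * s y' Ry') ∧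
    (∀ (r : ZMod N) (x x' y y' : Equiv.Perm (ZMod N)) (Rx Rx' Ry Ry' : GridRect N),
      IsHorizDecomp r x x' Rx Rx' → IsHorizDecomp r y y' Ry Ry' →
      s x Rx * s x' Rx' = s y Ry * s y' Ry') :=
  annulus_sign_independent_of_generator_general hN s hs
end

section
/- In a toroidal grid diagram of index N, for any generator x, there are exactly 2N positive domains of Maslov index two in D(x,x), namely the N horizontal annuli and the N vertical annuli; and each of these domains admits a unique decomposition as a sum of two rectangles R ∈ R(x,x') and R' ∈ R(x',x). -/
open Equiv

set_option linter.unusedSectionVars false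
set_option maxHeartbeats 1000000

section Aux
variable {N : ℕ} [NeZero N]

lemma not_inIco_right (a b : ZMod N) : ¬ InIco a b b := by
  unfold InIco; omega

lemma inIco_iff_not {a b : ZMod N} (h : a ≠ b) (t : ZMod N) :
    InIco a b t ↔ ¬ InIco b a t := by
  unfold InIco
  have hd : b - a ≠ 0 := sub_ne_zero.mpr (Ne.symm h)
  have h1 : t - b = (t - a) - (b - a) := by ring
  have h2 : a - b = -(b - a) := by ring
  have hneg : (-(b - a)).val = N - (b - a).val := by rw [ZMod.neg_val, if_neg hd]
  have hv : ((t - a) - (b - a)).val = ((t - a).val + (N - (b - a).val)) % N := by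
    rw [sub_eq_add_neg, ZMod.val_add, hneg]
  rw [h1, h2, hv, hneg]
  have hu : (t - a).val < N := ZMod.val_lt _
  have hdv : (b - a).val < N := ZMod.val_lt _
  have hdp : 0 < (b - a).val := ZMod.val_pos.mpr hd
  rcases lt_or_ge (t - a).val (b - a).val with hc | hc
  · have : ((t - a).val + (N - (b - a).val)) % N = (t - a).val + (N - (b - a).val) :=
      Nat.mod_eq_of_lt (by omega)
    omega
  · have h3 : (t - a).val + (N - (b - a).val) = ((t - a).val - (b - a).val) + N := by omega
    have : ((t - a).val + (N - (b - a).val)) % N = (t - a).val - (b - a).val := by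
      rw [h3, Nat.add_mod_right, Nat.mod_eq_of_lt (by omega)]
    omega

lemma ne_add_one (hN : 2 ≤ N) (c : ZMod N) : c ≠ c + 1 := by
  intro h
  have h1 : (1 : ZMod N) = 0 := left_eq_add.mp h
  have h2 : (1 : ZMod N).val = 1 := by haveI : Fact (1 < N) := ⟨hN⟩; exact ZMod.val_one N
  rw [h1] at h2; simp at h2

lemma inIco_succ (hN : 2 ≤ N) (c t : ZMod N) : InIco c (c + 1) t ↔ t = c := by
  unfold InIco
  have h1 : c + 1 - c = 1 := by ring
  have h2 : (1 : ZMod N).val = 1 := by haveI : Fact (1 < N) := ⟨hN⟩; exact ZMod.val_one N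
  rw [h1, h2, Nat.lt_one_iff, ZMod.val_eq_zero, sub_eq_zero]

lemma subset_single (hN : 2 ≤ N) {c1 c2 c : ZMod N} (h : c1 ≠ c2)
    (hs : ∀ t, InIco c1 c2 t → t = c) : c1 = c ∧ c2 = c1 + 1 := by
  have hc1 : c1 = c := hs c1 (inIco_self h)
  refine ⟨hc1, ?_⟩
  have hd : c2 - c1 ≠ 0 := sub_ne_zero.mpr (Ne.symm h)
  have hdp : 0 < (c2 - c1).val := ZMod.val_pos.mpr hd
  rcases Nat.lt_or_ge 1 (c2 - c1).val with hgt | hle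
  · exfalso
    have hmem : InIco c1 c2 (c1 + 1) := by
      unfold InIco
      have h3 : c1 + 1 - c1 = 1 := by ring
      rw [h3]
      have h2 : (1 : ZMod N).val = 1 := by haveI : Fact (1 < N) := ⟨hN⟩; exact ZMod.val_one N
      omega
    have := hs _ hmem
    exact ne_add_one hN c1 (hc1.trans this.symm)
  · have h4 : (c2 - c1).val = 1 := by omega
    have h2 : (1 : ZMod N).val = 1 := by haveI : Fact (1 < N) := ⟨hN⟩; exact ZMod.val_one N
    have h5 : c2 - c1 = 1 := ZMod.val_injective N (by rw [h4, h2])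
    have h6 := sub_eq_iff_eq_add.mp h5
    rw [h6]; ring

lemma cover {c1 c2 : ZMod N} (h : c1 ≠ c2) (t : ZMod N) (h1 : t ≠ c1) (h2 : t ≠ c2) :
    (InIco c1 c2 t ∧ t ≠ c1) ∨ (InIco c2 c1 t ∧ t ≠ c2) := by
  by_cases hm : InIco c2 c1 t
  · exact Or.inr ⟨hm, h2⟩
  · exact Or.inl ⟨(inIco_iff_not h t).mpr hm, h1⟩

lemma GridRect.ext' {R S : GridRect N} (h1 : R.r1 = S.r1) (h2 : R.r2 = S.r2)
    (h3 : R.c1 = S.c1) (h4 : R.c2 = S.c2) : R = S := by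
  cases R; cases S; simp_all

lemma decomp_classify (hN : 2 ≤ N) (x z : Equiv.Perm (ZMod N))
    (R R' : GridRect N) (h1 : Connects R x z) (h2 : Connects R' z x) :
    (R'.r1 = R.r1 ∧ R'.r2 = R.r2 ∧ R'.c1 = R.c2 ∧ R'.c2 = R.c1 ∧ R.r2 = R.r1 + 1 ∧
      ∀ p, R.coeff p + R'.coeff p = if p.1 = R.r1 then 1 else 0) ∨
    (R'.r1 = R.r2 ∧ R'.r2 = R.r1 ∧ R'.c1 = R.c1 ∧ R'.c2 = R.c2 ∧ R.c2 = R.c1 + 1 ∧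
      ∀ p, R.coeff p + R'.coeff p = if p.2 = R.c1 then 1 else 0) := by
  obtain ⟨e1, e2, e3, e4, e5, e6⟩ := h1
  obtain ⟨f1, f2, f3, f4, f5, f6⟩ := h2
  have hmem : ∀ r : ZMod N, z r ≠ x r → r = R.r1 ∨ r = R.r2 := by
    intro r hr
    by_contra hcon
    push_neg at hcon
    exact hr (e5 r hcon.1 hcon.2).symm
  have hm1 : R'.r1 = R.r1 ∨ R'.r1 = R.r2 := by
    apply hmem; rw [f1, f3]; exact fun hh => R'.hc hh
  have hm2 : R'.r2 = R.r1 ∨ R'.r2 = R.r2 := by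
    apply hmem; rw [f2, f4]; exact fun hh => R'.hc hh.symm
  rcases hm1 with ha1 | ha1 <;> rcases hm2 with ha2 | ha2
  case inl.inl => exact absurd (ha1.trans ha2.symm) R'.hr
  case inr.inr => exact absurd (ha1.trans ha2.symm) R'.hr
  case inl.inr => -- Case A : same orientation, horizontal annulus
    left
    have hc1' : R'.c1 = R.c2 := by rw [← f1, ha1, e3]
    have hc2' : R'.c2 = R.c1 := by rw [← f2, ha2, e4]
    have hno : ∀ r : ZMod N, InIco R.r1 R.r2 r → r = R.r1 := by
      intro r hr
      by_contra hne
      have hne2 : r ≠ R.r2 := fun hh => not_inIco_right R.r1 R.r2 (hh ▸ hr)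
      have hx1 : x r ≠ R.c1 := fun hh => hne (x.injective (hh.trans e1.symm))
      have hx2 : x r ≠ R.c2 := fun hh => hne2 (x.injective (hh.trans e2.symm))
      rcases cover R.hc (x r) hx1 hx2 with hcv | hcv
      · exact e6 r hr hne hcv
      · exact f6 r (by rw [ha1, ha2]; exact hr) (by rw [ha1]; exact hne)
          (by rw [hc1', hc2', ← e5 r hne hne2]; exact ⟨hcv.1, hcv.2⟩)
    have hr2 : R.r2 = R.r1 + 1 := (subset_single hN R.hr hno).2
    refine ⟨ha1, ha2, hc1', hc2', hr2, ?_⟩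
    intro p
    have hrow : InIco R.r1 R.r2 p.1 ↔ p.1 = R.r1 := by rw [hr2]; exact inIco_succ hN _ _
    have hcol : InIco R.c2 R.c1 p.2 ↔ ¬ InIco R.c1 R.c2 p.2 := by
      exact inIco_iff_not R.hc.symm p.2
    simp only [GridRect.coeff, ha1, ha2, hc1', hc2', hrow, hcol]
    by_cases hp : p.1 = R.r1 <;> by_cases hq : InIco R.c1 R.c2 p.2 <;> simp [hp, hq]
  case inr.inl => -- Case B : opposite orientation, vertical annulus
    right
    have hc1' : R'.c1 = R.c1 := by rw [← f1, ha1, e4]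
    have hc2' : R'.c2 = R.c2 := by rw [← f2, ha2, e3]
    have hno : ∀ t : ZMod N, InIco R.c1 R.c2 t → t = R.c1 := by
      intro t ht
      by_contra hne
      have hne2 : t ≠ R.c2 := fun hh => not_inIco_right R.c1 R.c2 (hh ▸ ht)
      set r := x.symm t with hrdef
      have hxr : x r = t := x.apply_symm_apply t
      have hr1 : r ≠ R.r1 := fun hh => hne (by rw [← hxr, hh, e1])
      have hr2 : r ≠ R.r2 := fun hh => hne2 (by rw [← hxr, hh, e2])
      rcases cover R.hr r hr1 hr2 with hcv | hcv
      · exact e6 r hcv.1 hcv.2 ⟨hxr ▸ ht, hxr ▸ hne⟩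
      · exact f6 r (by rw [ha1, ha2]; exact hcv.1) (by rw [ha1]; exact hcv.2)
          (by rw [hc1', hc2', ← e5 r hr1 hr2, hxr]; exact ⟨ht, hne⟩)
    have hcc : R.c2 = R.c1 + 1 := (subset_single hN R.hc hno).2
    refine ⟨ha1, ha2, hc1', hc2', hcc, ?_⟩
    intro p
    have hcolm : InIco R.c1 R.c2 p.2 ↔ p.2 = R.c1 := by rw [hcc]; exact inIco_succ hN _ _
    have hrows : InIco R.r2 R.r1 p.1 ↔ ¬ InIco R.r1 R.r2 p.1 := by
      exact inIco_iff_not R.hr.symm p.1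
    simp only [GridRect.coeff, ha1, ha2, hc1', hc2', hcolm, hrows]
    by_cases hp : p.2 = R.c1 <;> by_cases hq : InIco R.r1 R.r2 p.1 <;> simp [hp, hq]

end Aux

section Aux2
variable {N : ℕ} [NeZero N]

/-- Canonical rectangle of the vertical decomposition. -/
def vertR (hN : 2 ≤ N) (x : Equiv.Perm (ZMod N)) (c : ZMod N) : GridRect N :=
  ⟨x.symm c, x.symm (c + 1), c, c + 1,
    fun h => ne_add_one hN c (x.symm.injective h), ne_add_one hN c⟩

def vertR' (hN : 2 ≤ N) (x : Equiv.Perm (ZMod N)) (c : ZMod N) : GridRect N :=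
  ⟨x.symm (c + 1), x.symm c, c, c + 1,
    fun h => ne_add_one hN c (x.symm.injective h.symm), ne_add_one hN c⟩

lemma vert_canonical (hN : 2 ≤ N) (x : Equiv.Perm (ZMod N)) (c : ZMod N) :
    IsVertDecomp c x (x.trans (Equiv.swap c (c + 1))) (vertR hN x c) (vertR' hN x c) := by
  have hxc : ∀ r : ZMod N, r ≠ x.symm c → x r ≠ c :=
    fun r hr h => hr ((Equiv.eq_symm_apply _).mpr h)
  have hxc1 : ∀ r : ZMod N, r ≠ x.symm (c + 1) → x r ≠ c + 1 :=
    fun r hr h => hr ((Equiv.eq_symm_apply _).mpr h)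
  have hagree : ∀ r : ZMod N, r ≠ x.symm c → r ≠ x.symm (c + 1) →
      x r = (x.trans (Equiv.swap c (c + 1))) r := by
    intro r h1 h2
    simp only [Equiv.trans_apply]
    exact (Equiv.swap_apply_of_ne_of_ne (hxc r h1) (hxc1 r h2)).symm
  refine ⟨⟨x.apply_symm_apply c, x.apply_symm_apply (c + 1), ?_, ?_, hagree, ?_⟩,
    ⟨?_, ?_, x.apply_symm_apply (c + 1), x.apply_symm_apply c,
      fun r h1 h2 => (hagree r h2 h1).symm, ?_⟩, ?_⟩
  · simp only [vertR, Equiv.trans_apply, x.apply_symm_apply, Equiv.swap_apply_left]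
  · simp only [vertR, Equiv.trans_apply, x.apply_symm_apply, Equiv.swap_apply_right]
  · rintro r - - ⟨hm, hne⟩
    exact hne ((inIco_succ hN c _).mp hm)
  · simp only [vertR', Equiv.trans_apply, x.apply_symm_apply, Equiv.swap_apply_right]
  · simp only [vertR', Equiv.trans_apply, x.apply_symm_apply, Equiv.swap_apply_left]
  · rintro r - - ⟨hm, hne⟩
    exact hne ((inIco_succ hN c _).mp hm)
  · intro p
    have hab : x.symm c ≠ x.symm (c + 1) := fun h => ne_add_one hN c (x.symm.injective h)
    simp only [GridRect.coeff, vertR, vertR', inIco_succ hN c p.2, inIco_iff_not hab p.1]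
    by_cases hp : p.2 = c <;> by_cases hq : InIco (x.symm (c + 1)) (x.symm c) p.1 <;>
      simp [hp, hq]

lemma vert_unique_aux (hN : 2 ≤ N) (x z : Equiv.Perm (ZMod N)) (c : ZMod N)
    (S S' : GridRect N) (h : IsVertDecomp c x z S S') :
    S.r1 = x.symm c ∧ S.r2 = x.symm (c + 1) ∧ S.c1 = c ∧ S.c2 = c + 1 ∧
    S'.r1 = x.symm (c + 1) ∧ S'.r2 = x.symm c ∧ S'.c1 = c ∧ S'.c2 = c + 1 ∧
    z = x.trans (Equiv.swap c (c + 1)) := by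
  obtain ⟨h1, h2, h3⟩ := h
  rcases decomp_classify hN x z S S' h1 h2 with ⟨-, -, -, -, -, hsum⟩ | ⟨g1, g2, g3, g4, g5, hsum⟩
  · exfalso
    have heq : (if (c + 1 : ZMod N) = c then 1 else 0) = (if S.r1 = S.r1 then (1 : ℕ) else 0) := by
      rw [← h3 (S.r1, c + 1), hsum (S.r1, c + 1)]
    simp [(ne_add_one hN c).symm] at heq
  · have hc1 : S.c1 = c := by
      have heq : (if S.c1 = c then 1 else 0) = (if S.c1 = S.c1 then (1 : ℕ) else 0) := by
        rw [← h3 ((0 : ZMod N), S.c1), hsum ((0 : ZMod N), S.c1)]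
      by_contra hne
      simp [hne] at heq
    have hc2 : S.c2 = c + 1 := by rw [g5, hc1]
    obtain ⟨e1, e2, e3, e4, e5, e6⟩ := h1
    have hr1 : S.r1 = x.symm c := (Equiv.eq_symm_apply _).mpr (by rw [e1, hc1])
    have hr2 : S.r2 = x.symm (c + 1) := (Equiv.eq_symm_apply _).mpr (by rw [e2, hc2])
    refine ⟨hr1, hr2, hc1, hc2, g1.trans hr2, g2.trans hr1, g3.trans hc1, g4.trans hc2, ?_⟩
    ext t
    simp only [Equiv.trans_apply]
    by_cases ht1 : t = S.r1
    · rw [ht1, e3, hc2, e1, hc1, Equiv.swap_apply_left]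
    · by_cases ht2 : t = S.r2
      · rw [ht2, e4, hc1, e2, hc2, Equiv.swap_apply_right]
      · rw [← e5 t ht1 ht2]
        refine (Equiv.swap_apply_of_ne_of_ne ?_ ?_).symm
        · exact fun hh => ht1 (by rw [hr1]; exact (Equiv.eq_symm_apply _).mpr hh)
        · exact fun hh => ht2 (by rw [hr2]; exact (Equiv.eq_symm_apply _).mpr hh)

/-- Canonical rectangles of the horizontal decomposition. -/
def horizR (hN : 2 ≤ N) (x : Equiv.Perm (ZMod N)) (r : ZMod N) : GridRect N :=
  ⟨r, r + 1, x r, x (r + 1), ne_add_one hN r,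
    fun h => ne_add_one hN r (x.injective h)⟩

def horizR' (hN : 2 ≤ N) (x : Equiv.Perm (ZMod N)) (r : ZMod N) : GridRect N :=
  ⟨r, r + 1, x (r + 1), x r, ne_add_one hN r,
    fun h => ne_add_one hN r (x.injective h.symm)⟩

lemma horiz_canonical (hN : 2 ≤ N) (x : Equiv.Perm (ZMod N)) (r : ZMod N) :
    IsHorizDecomp r x ((Equiv.swap r (r + 1)).trans x) (horizR hN x r) (horizR' hN x r) := by
  have hagree : ∀ t : ZMod N, t ≠ r → t ≠ r + 1 →
      x t = ((Equiv.swap r (r + 1)).trans x) t := by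
    intro t h1 h2
    simp only [Equiv.trans_apply, Equiv.swap_apply_of_ne_of_ne h1 h2]
  refine ⟨⟨rfl, rfl, ?_, ?_, hagree, ?_⟩,
    ⟨?_, ?_, rfl, rfl, fun t h1 h2 => (hagree t h1 h2).symm, ?_⟩, ?_⟩
  · simp only [horizR, Equiv.trans_apply, Equiv.swap_apply_left]
  · simp only [horizR, Equiv.trans_apply, Equiv.swap_apply_right]
  · intro t ht hne
    exact absurd ((inIco_succ hN r t).mp ht) hne
  · simp only [horizR', Equiv.trans_apply, Equiv.swap_apply_left]
  · simp only [horizR', Equiv.trans_apply, Equiv.swap_apply_right]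
  · intro t ht hne
    exact absurd ((inIco_succ hN r t).mp ht) hne
  · intro p
    have hcd : x r ≠ x (r + 1) := fun h => ne_add_one hN r (x.injective h)
    simp only [GridRect.coeff, horizR, horizR', inIco_succ hN r p.1, inIco_iff_not hcd p.2]
    by_cases hp : p.1 = r <;> by_cases hq : InIco (x (r + 1)) (x r) p.2 <;> simp [hp, hq]

lemma horiz_unique_aux (hN : 2 ≤ N) (x z : Equiv.Perm (ZMod N)) (r : ZMod N)
    (S S' : GridRect N) (h : IsHorizDecomp r x z S S') :
    S.r1 = r ∧ S.r2 = r + 1 ∧ S.c1 = x r ∧ S.c2 = x (r + 1) ∧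
    S'.r1 = r ∧ S'.r2 = r + 1 ∧ S'.c1 = x (r + 1) ∧ S'.c2 = x r ∧
    z = (Equiv.swap r (r + 1)).trans x := by
  obtain ⟨h1, h2, h3⟩ := h
  rcases decomp_classify hN x z S S' h1 h2 with ⟨g1, g2, g3, g4, g5, hsum⟩ | ⟨-, -, -, -, -, hsum⟩
  swap
  · exfalso
    have heq : (if (S.c1 + 1 : ZMod N) = S.c1 then 1 else 0) = (if (r : ZMod N) = r then (1 : ℕ) else 0) := by
      rw [← hsum (r, S.c1 + 1), h3 (r, S.c1 + 1)]
    simp [(ne_add_one hN S.c1).symm] at heq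
  · have hr1 : S.r1 = r := by
      have heq : (if S.r1 = S.r1 then 1 else 0) = (if S.r1 = r then (1 : ℕ) else 0) := by
        rw [← hsum (S.r1, 0), h3 (S.r1, 0)]
      by_contra hne
      simp [hne] at heq
    have hr2 : S.r2 = r + 1 := by rw [g5, hr1]
    obtain ⟨e1, e2, e3, e4, e5, e6⟩ := h1
    have hc1 : S.c1 = x r := by rw [← e1, hr1]
    have hc2 : S.c2 = x (r + 1) := by rw [← e2, hr2]
    refine ⟨hr1, hr2, hc1, hc2, g1.trans hr1, g2.trans hr2, g3.trans hc2, g4.trans hc1, ?_⟩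
    ext t
    simp only [Equiv.trans_apply]
    by_cases ht1 : t = r
    · rw [ht1, ← hr1, e3, hc2, hr1, Equiv.swap_apply_left]
    · by_cases ht2 : t = r + 1
      · rw [ht2, ← hr2, e4, hc1, hr2, Equiv.swap_apply_right]
      · rw [← e5 t (hr1 ▸ ht1) (hr2 ▸ ht2), Equiv.swap_apply_of_ne_of_ne ht1 ht2]

end Aux2
/-- In a toroidal grid diagram of index `N ≥ 2`, for any generator `x` there
are exactly `2N` positive Maslov index two domains in `D(x,x)` — domains
decomposable as a sum of two rectangles from `x` to some generator `z` and
back — namely the `N` horizontal annuli and the `N` vertical annuli; and each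
of these admits a unique such decomposition. -/
theorem annuli_decompositions {N : ℕ} [NeZero N] (hN : 2 ≤ N)
    (x : Equiv.Perm (ZMod N)) :
    (∀ c : ZMod N, ∃! d : Equiv.Perm (ZMod N) × GridRect N × GridRect N,
      IsVertDecomp c x d.1 d.2.1 d.2.2) ∧
    (∀ r : ZMod N, ∃! d : Equiv.Perm (ZMod N) × GridRect N × GridRect N,
      IsHorizDecomp r x d.1 d.2.1 d.2.2) ∧
    (∀ (z : Equiv.Perm (ZMod N)) (R R' : GridRect N),
      Connects R x z → Connects R' z x →
      (∃ c : ZMod N, ∀ p : ZMod N × ZMod N,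
        R.coeff p + R'.coeff p = if p.2 = c then 1 else 0) ∨
      (∃ r : ZMod N, ∀ p : ZMod N × ZMod N,
        R.coeff p + R'.coeff p = if p.1 = r then 1 else 0)) ∧
    Set.ncard {D : ZMod N × ZMod N → ℕ |
      ∃ (z : Equiv.Perm (ZMod N)) (R R' : GridRect N),
        Connects R x z ∧ Connects R' z x ∧
        ∀ p, D p = R.coeff p + R'.coeff p} = 2 * N := by
  refine ⟨?_, ?_, ?_, ?_⟩
  · -- vertical annuli: unique decomposition
    intro c
    refine ⟨(x.trans (Equiv.swap c (c + 1)), vertR hN x c, vertR' hN x c),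
      vert_canonical hN x c, ?_⟩
    rintro ⟨z, S, S'⟩ hd
    obtain ⟨u1, u2, u3, u4, u5, u6, u7, u8, u9⟩ := vert_unique_aux hN x z c S S' hd
    exact Prod.ext u9 (Prod.ext (GridRect.ext' u1 u2 u3 u4) (GridRect.ext' u5 u6 u7 u8))
  · -- horizontal annuli: unique decomposition
    intro r
    refine ⟨((Equiv.swap r (r + 1)).trans x, horizR hN x r, horizR' hN x r),
      horiz_canonical hN x r, ?_⟩
    rintro ⟨z, S, S'⟩ hd
    obtain ⟨u1, u2, u3, u4, u5, u6, u7, u8, u9⟩ := horiz_unique_aux hN x z r S S' hd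
    exact Prod.ext u9 (Prod.ext (GridRect.ext' u1 u2 u3 u4) (GridRect.ext' u5 u6 u7 u8))
  · -- every two-rectangle decomposition is an annulus
    intro z R R' h1 h2
    rcases decomp_classify hN x z R R' h1 h2 with ⟨-, -, -, -, -, hsum⟩ | ⟨-, -, -, -, -, hsum⟩
    · exact Or.inr ⟨R.r1, hsum⟩
    · exact Or.inl ⟨R.c1, hsum⟩
  · -- there are exactly 2N such domains
    have hset : {D : ZMod N × ZMod N → ℕ |
        ∃ (z : Equiv.Perm (ZMod N)) (R R' : GridRect N),
          Connects R x z ∧ Connects R' z x ∧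
          ∀ p, D p = R.coeff p + R'.coeff p} =
        Set.range (Sum.elim
          (fun c : ZMod N => fun p : ZMod N × ZMod N => if p.2 = c then 1 else 0)
          (fun r : ZMod N => fun p : ZMod N × ZMod N => if p.1 = r then 1 else 0)) := by
      ext D
      constructor
      · rintro ⟨z, R, R', h1, h2, hD⟩
        rcases decomp_classify hN x z R R' h1 h2 with ⟨-, -, -, -, -, hsum⟩ | ⟨-, -, -, -, -, hsum⟩
        · exact ⟨Sum.inr R.r1, by funext p; exact ((hD p).trans (hsum p)).symm⟩
        · exact ⟨Sum.inl R.c1, by funext p; exact ((hD p).trans (hsum p)).symm⟩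
      · rintro ⟨i, hi⟩
        cases i with
        | inl c =>
          obtain ⟨hc1, hc2, hc3⟩ := vert_canonical hN x c
          exact ⟨x.trans (Equiv.swap c (c + 1)), vertR hN x c, vertR' hN x c, hc1, hc2,
            fun p => by rw [← hi]; exact (hc3 p).symm⟩
        | inr r =>
          obtain ⟨hc1, hc2, hc3⟩ := horiz_canonical hN x r
          exact ⟨(Equiv.swap r (r + 1)).trans x, horizR hN x r, horizR' hN x r, hc1, hc2,
            fun p => by rw [← hi]; exact (hc3 p).symm⟩
    have hinj : Function.Injective (Sum.elim
        (fun c : ZMod N => fun p : ZMod N × ZMod N => if p.2 = c then 1 else 0)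
        (fun r : ZMod N => fun p : ZMod N × ZMod N => if p.1 = r then 1 else 0)) := by
      rintro (c1 | r1) (c2 | r2) h
      · have hc : c1 = c2 := by
          by_contra hne
          have := congrFun h ((0 : ZMod N), c1)
          simp [hne] at this
        rw [hc]
      · exfalso
        have := congrFun h ((r2 + 1 : ZMod N), c1)
        simp [(ne_add_one hN r2).symm] at this
      · exfalso
        have := congrFun h ((r1 + 1 : ZMod N), c2)
        simp [(ne_add_one hN r1).symm] at this
      · have hr : r1 = r2 := by
          by_contra hne
          have := congrFun h ((r1 : ZMod N), (0 : ZMod N))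
          simp [hne] at this
        rw [hr]
    rw [hset, ← Nat.card_coe_set_eq, Nat.card_range_of_injective hinj,
      Nat.card_sum, Nat.card_zmod]
    omega
end
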